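/- Let spin(7) ⊂ so(8) be the span of the 21 matrices A_1 = E_{12}+E_{34}, A_2 = E_{13}−E_{24}, A_3 = E_{14}+E_{23}, A_4 = E_{56}+E_{78}, A_5 = −E_{57}+E_{68}, A_6 = E_{58}+E_{67}, A_7 = −E_{15}+E_{26}, A_8 = E_{12}+E_{56}, A_9 = E_{16}+E_{25}, A_{10} = E_{37}−E_{48}, A_{11} = E_{38}+E_{47}, A_{12} = E_{17}+E_{28}, A_{13} = E_{18}−E_{27}, A_{14} = E_{35}+E_{46}, A_{15} = E_{36}−E_{45}, A_{16} = E_{18}+E_{36}, A_{17} = E_{17}+E_{35}, A_{18} = E_{26}−E_{48}, A_{19} = E_{25}+E_{38}, A_{20} = E_{23}+E_{67}, A_{21} = E_{24}+E_{57}. Then the linear map P : ℝ⁸ → spin(7) defined by P(e_1)=0, P(e_2)=−A_{14}, P(e_3)=0, P(e_4)=A_{21}, P(e_5)=A_{20}, P(e_6)=A_{21}−A_{18}, P(e_7)=A_{15}−A_{16}, P(e_8)=A_{14}−A_{17} satisfies ⟨P(u)v,w⟩ + ⟨P(v)w,u⟩ + ⟨P(w)u,v⟩ = 0 for all u,v,w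 ∈ ℝ⁸. -/

import Mathlib

open Matrix

/-- Elementary skew-symmetric matrix `E_{ij}` (0-indexed: `E i j` corresponds to `E_{(i+1)(j+1)}`). -/
noncomputable def E (n : ℕ) (i j : Fin n) : Matrix (Fin n) (Fin n) ℝ :=
  Matrix.single i j 1 - Matrix.single j i 1

noncomputable def B1 : Matrix (Fin 8) (Fin 8) ℝ := E 8 0 1 + E 8 2 3
noncomputable def B2 : Matrix (Fin 8) (Fin 8) ℝ := E 8 0 2 - E 8 1 3
noncomputable def B3 : Matrix (Fin 8) (Fin 8) ℝ := E 8 0 3 + E 8 1 2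
noncomputable def B4 : Matrix (Fin 8) (Fin 8) ℝ := E 8 4 5 + E 8 6 7
noncomputable def B5 : Matrix (Fin 8) (Fin 8) ℝ := -E 8 4 6 + E 8 5 7
noncomputable def B6 : Matrix (Fin 8) (Fin 8) ℝ := E 8 4 7 + E 8 5 6
noncomputable def B7 : Matrix (Fin 8) (Fin 8) ℝ := -E 8 0 4 + E 8 1 5
noncomputable def B8 : Matrix (Fin 8) (Fin 8) ℝ := E 8 0 1 + E 8 4 5
noncomputable def B9 : Matrix (Fin 8) (Fin 8) ℝ := E 8 0 5 + E 8 1 4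
noncomputable def B10 : Matrix (Fin 8) (Fin 8) ℝ := E 8 2 6 - E 8 3 7
noncomputable def B11 : Matrix (Fin 8) (Fin 8) ℝ := E 8 2 7 + E 8 3 6
noncomputable def B12 : Matrix (Fin 8) (Fin 8) ℝ := E 8 0 6 + E 8 1 7
noncomputable def B13 : Matrix (Fin 8) (Fin 8) ℝ := E 8 0 7 - E 8 1 6
noncomputable def B14 : Matrix (Fin 8) (Fin 8) ℝ := E 8 2 4 + E 8 3 5
noncomputable def B15 : Matrix (Fin 8) (Fin 8) ℝ := E 8 2 5 - E 8 3 4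
noncomputable def B16 : Matrix (Fin 8) (Fin 8) ℝ := E 8 0 7 + E 8 2 5
noncomputable def B17 : Matrix (Fin 8) (Fin 8) ℝ := E 8 0 6 + E 8 2 4
noncomputable def B18 : Matrix (Fin 8) (Fin 8) ℝ := E 8 1 5 - E 8 3 7
noncomputable def B19 : Matrix (Fin 8) (Fin 8) ℝ := E 8 1 4 + E 8 2 7
noncomputable def B20 : Matrix (Fin 8) (Fin 8) ℝ := E 8 1 2 + E 8 5 6
noncomputable def B21 : Matrix (Fin 8) (Fin 8) ℝ := E 8 1 3 + E 8 4 6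

/-- The span of the 21 matrices: `spin(7) ⊂ so(8)`. -/
noncomputable def spin7span : Submodule ℝ (Matrix (Fin 8) (Fin 8) ℝ) :=
  Submodule.span ℝ {B1, B2, B3, B4, B5, B6, B7, B8, B9, B10, B11, B12, B13, B14, B15, B16, B17,
    B18, B19, B20, B21}

/-- Values of the map `P` on the standard basis of `ℝ⁸`. -/
noncomputable def PB : Fin 8 → Matrix (Fin 8) (Fin 8) ℝ :=
  ![0, -B14, 0, B21, B20, B21 - B18, B15 - B16, B14 - B17]

/-- The linear map `P : ℝ⁸ → spin(7)`. -/
noncomputable def Pmap (u : Fin 8 → ℝ) : Matrix (Fin 8) (Fin 8) ℝ := ∑ i, u i • PB i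

lemma E_mulVec_dotProduct {n : ℕ} (i j : Fin n) (v w : Fin n → ℝ) :
    (E n i j *ᵥ v) ⬝ᵥ w = v j * w i - v i * w j := by
  simp only [E, sub_mulVec, sub_dotProduct, single_mulVec, one_mul]
  exact congr_arg₂ _ (single_dotProduct w _ _) (single_dotProduct w _ _)

lemma PB_mem_spin7span (i : Fin 8) : PB i ∈ spin7span := by
  have hB : ∀ {M}, M ∈ ({B1, B2, B3, B4, B5, B6, B7, B8, B9, B10, B11, B12, B13, B14, B15, B16,
      B17, B18, B19, B20, B21} : Set (Matrix (Fin 8) (Fin 8) ℝ)) → M ∈ spin7span :=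
    fun hM => Submodule.subset_span hM
  fin_cases i <;> simp only [PB, Fin.reduceFinMk, cons_val]
  · exact zero_mem _
  · exact neg_mem (hB (by simp))
  · exact zero_mem _
  · exact hB (by simp)
  · exact hB (by simp)
  · exact sub_mem (hB (by simp)) (hB (by simp))
  · exact sub_mem (hB (by simp)) (hB (by simp))
  · exact sub_mem (hB (by simp)) (hB (by simp))

lemma Pmap_mem_spin7span (u : Fin 8 → ℝ) : Pmap u ∈ spin7span :=
  Submodule.sum_mem _ fun i _ => Submodule.smul_mem _ _ (PB_mem_spin7span i)

lemma Pmap_mulVec_dotProduct (u v w : Fin 8 → ℝ) :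
    (Pmap u *ᵥ v) ⬝ᵥ w = ∑ i, u i * ((PB i *ᵥ v) ⬝ᵥ w) := by
  simp only [Pmap, sum_mulVec, sum_dotProduct, smul_mulVec, smul_dotProduct, smul_eq_mul]

/-- `P` takes values in `spin(7)` and satisfies the weak-curvature identity. -/
theorem stmt15 :
    (∀ u : Fin 8 → ℝ, Pmap u ∈ spin7span) ∧
    ∀ u v w : Fin 8 → ℝ,
      ((Pmap u).mulVec v) ⬝ᵥ w + ((Pmap v).mulVec w) ⬝ᵥ u + ((Pmap w).mulVec u) ⬝ᵥ v = 0 := by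
  refine ⟨Pmap_mem_spin7span, fun u v w => ?_⟩
  simp only [Pmap_mulVec_dotProduct, Fin.sum_univ_eight, PB, cons_val, B14, B15, B16, B17, B18,
    B20, B21, zero_mulVec, neg_mulVec, add_mulVec, sub_mulVec, zero_dotProduct, neg_dotProduct,
    add_dotProduct, sub_dotProduct, E_mulVec_dotProduct]
  ring
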